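/- arXiv:1806.05968 — 2 statements merged into one kernel-verified Lean document; each statement's English description precedes it below -/
import Mathlib

section
/- Let (B_{n,p})_{n,p ≥ 0} be the family of rational numbers determined by the initial condition B_{n,0} = B_n (the n-th Bernoulli number, with the convention B_1 = -1/2, i.e. the numbers whose exponential generating function is t/(e^t - 1)) together with the recursion B_{n+1,p} = p·B_{n,p} - ((p+1)^2/(p+2))·B_{n,p+1} for all n, p ≥ 0. For p ≥ 0 let F_p(X) = Σ_{n≥0} B_{n,p} X^n/n! be the corresponding exponential generating function, viewed as a formal power series over ℚ. Then for every p ≥ 0 one has the identity of formal power series F_p(X)·(exp(X) - 1)^{p+1} = (p+1)·(X - H_p)·exp(p·X) + (p+1)·Σ_{k=1}^{p} C(p,k)·H_k·(exp(X) - 1)^{p-k}, where H_n = Σ_{j=1}^{n} 1/j denotes the n-th harmonic number (H_0 = 0) and C(p,k) is the binomial coefficient. -/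
/-!
Write `u = exp X - 1` and let `K p` (`pBernoulliNumerator p`) be given by `K 0 = X` and
`K (p + 1) = exp X * K p - u ^ (p + 1) / (p + 1)`,
i.e. `K p = X e^{pX} - ∑_{j=1}^p e^{(p-j)X} u^j / j`. Then `K p' = p K p + u ^ p`, which is
exactly what is needed to push `F p * u ^ (p + 1) = (p + 1) K p` through the recursion, whose
generating-function form is `(p+1)²/(p+2) F (p+1) = p F p - F p'`; the case `p = 0` is
`t / (eᵗ - 1) * (eᵗ - 1) = t`. Finally, Pascal's rule and `H (k + 1) = H k + 1 / (k + 1)` show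
that the right-hand side, divided by `p + 1`, obeys the same recursion as `K p`.
-/

open PowerSeries Finset

theorem sum_Icc_one_eq_sum_range {M : Type*} [AddCommMonoid M] (f : ℕ → M) (n : ℕ) :
    ∑ k ∈ Icc 1 n, f k = ∑ k ∈ range n, f (k + 1) := by
  rw [← Ico_add_one_right_eq_Icc, sum_Ico_eq_sum_range]
  simp [add_comm]

section

variable {A : Type*} [CommRing A] [Algebra ℚ A]

theorem sum_range_choose_div_succ_smul_pow (p : ℕ) (u : A) :
    ∑ k ∈ range (p + 1), (p.choose k / (k + 1) : ℚ) • u ^ (p - k) =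
      ((p : ℚ) + 1)⁻¹ • ((u + 1) ^ (p + 1) - u ^ (p + 1)) := by
  rw [add_comm u, add_pow, sum_range_succ' _ (p + 1), Nat.choose_zero_right, Nat.cast_one, mul_one,
    pow_zero, one_mul, Nat.sub_zero, add_sub_cancel_right, smul_sum]
  refine sum_congr rfl fun k _ => ?_
  rw [one_pow, one_mul, Nat.add_sub_add_right, mul_comm, ← nsmul_eq_mul,
    ← Nat.cast_smul_eq_nsmul ℚ, smul_smul]
  congr 1
  have h : ((p : ℚ) + 1) * p.choose k = (p + 1).choose (k + 1) * (k + 1) := by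
    exact_mod_cast Nat.add_one_mul_choose_eq p k
  field_simp
  linear_combination h

theorem sum_Icc_choose_mul_harmonic_smul_pow_succ (p : ℕ) (u : A) :
    ∑ k ∈ Icc 1 (p + 1), ((p + 1).choose k * harmonic k : ℚ) • u ^ (p + 1 - k) =
      (u + 1) * ∑ k ∈ Icc 1 p, (p.choose k * harmonic k : ℚ) • u ^ (p - k) +
        ((p : ℚ) + 1)⁻¹ • ((u + 1) ^ (p + 1) - u ^ (p + 1)) := by
  have hS : ∑ k ∈ range (p + 1), (p.choose k * harmonic k : ℚ) • u ^ (p - k) =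
      ∑ k ∈ Icc 1 p, (p.choose k * harmonic k : ℚ) • u ^ (p - k) := by
    rw [sum_range_succ', sum_Icc_one_eq_sum_range]
    simp
  have huS :
      ∑ k ∈ range (p + 1), (p.choose (k + 1) * harmonic (k + 1) : ℚ) • u ^ (p - k) =
        u * ∑ k ∈ Icc 1 p, (p.choose k * harmonic k : ℚ) • u ^ (p - k) := by
    rw [sum_range_succ, sum_Icc_one_eq_sum_range, mul_sum]
    simp only [Nat.choose_succ_self, Nat.cast_zero, zero_mul, zero_smul, add_zero]
    refine sum_congr rfl fun k _ => ?_
    rw [mul_smul_comm, ← pow_succ', show p - (k + 1) + 1 = p - k by grind]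
  have hterm (k : ℕ) :
      ((p + 1).choose (k + 1) * harmonic (k + 1) : ℚ) • u ^ (p + 1 - (k + 1)) =
        (p.choose k * harmonic k : ℚ) • u ^ (p - k) +
          (p.choose k / (k + 1) : ℚ) • u ^ (p - k) +
            (p.choose (k + 1) * harmonic (k + 1) : ℚ) • u ^ (p - k) := by
    rw [Nat.add_sub_add_right, ← add_smul, ← add_smul, Nat.choose_succ_succ', harmonic_succ]
    congr 1
    push_cast
    ring
  rw [sum_Icc_one_eq_sum_range, sum_congr rfl fun k _ => hterm k, sum_add_distrib,
    sum_add_distrib, hS, huS, sum_range_choose_div_succ_smul_pow]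
  ring

end

theorem derivative_mk_div_factorial {K : Type*} [Field K] [CharZero K] (a : ℕ → K) :
    d⁄dX K (mk fun n => a n / n.factorial) = mk fun n => a (n + 1) / n.factorial := by
  ext n
  rw [coeff_derivative, coeff_mk, coeff_mk, Nat.factorial_succ]
  push_cast
  field_simp

theorem derivative_exp_sub_one_pow (p : ℕ) :
    d⁄dX ℚ ((exp ℚ - 1) ^ (p + 1)) = C ((p : ℚ) + 1) * (exp ℚ - 1) ^ p * exp ℚ := by
  rw [derivative_pow, map_sub, derivative_exp, derivative_one, sub_zero, add_tsub_cancel_right,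
    map_add, map_natCast, map_one, Nat.cast_succ]

theorem C_inv_mul_natCast_add_one (p : ℕ) : C ((p : ℚ) + 1)⁻¹ * (C (p : ℚ) + 1) = 1 := by
  rw [← map_one C, ← map_add, ← map_mul, inv_mul_cancel₀ (by positivity)]

noncomputable def pBernoulliNumerator : ℕ → ℚ⟦X⟧
  | 0 => X
  | p + 1 => exp ℚ * pBernoulliNumerator p - C ((p : ℚ) + 1)⁻¹ * (exp ℚ - 1) ^ (p + 1)

theorem derivative_pBernoulliNumerator (p : ℕ) :
    d⁄dX ℚ (pBernoulliNumerator p) =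
      C (p : ℚ) * pBernoulliNumerator p + (exp ℚ - 1) ^ p := by
  induction p with
  | zero => simp [pBernoulliNumerator]
  | succ p ih =>
    simp only [pBernoulliNumerator, map_sub, Derivation.leibniz, smul_eq_mul, ih, derivative_exp,
      derivative_C, derivative_exp_sub_one_pow, mul_zero, add_zero, Nat.cast_succ, map_add, map_one]
    linear_combination
      ((exp ℚ - 1) ^ (p + 1) - exp ℚ * (exp ℚ - 1) ^ p) * C_inv_mul_natCast_add_one p

theorem pBernoulliNumerator_eq (p : ℕ) :
    pBernoulliNumerator p = (X - C (harmonic p)) * exp ℚ ^ p +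
      ∑ k ∈ Icc 1 p, C (p.choose k * harmonic k : ℚ) * (exp ℚ - 1) ^ (p - k) := by
  induction p with
  | zero => simp [pBernoulliNumerator]
  | succ p ih =>
    have h := sum_Icc_choose_mul_harmonic_smul_pow_succ p (exp ℚ - 1)
    simp only [smul_eq_C_mul, sub_add_cancel] at h
    rw [pBernoulliNumerator, ih, h, harmonic_succ, map_add]
    push_cast
    ring

section

variable {B : ℕ → ℕ → ℚ}

theorem C_mul_mk_succ_eq_sub_derivative
    (hrec : ∀ n p : ℕ, B (n + 1) p =
      (p : ℚ) * B n p - ((p + 1 : ℚ) ^ 2 / (p + 2)) * B n (p + 1)) (p : ℕ) :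
    C (((p : ℚ) + 1) ^ 2 / (p + 2)) * mk (fun n => B n (p + 1) / n.factorial) =
      C (p : ℚ) * mk (fun n => B n p / n.factorial) -
        d⁄dX ℚ (mk fun n => B n p / n.factorial) := by
  ext n
  simp only [derivative_mk_div_factorial, map_sub, coeff_C_mul, coeff_mk, hrec]
  ring

theorem mk_mul_exp_sub_one_pow (hinit : ∀ n : ℕ, B n 0 = bernoulli n)
    (hrec : ∀ n p : ℕ, B (n + 1) p =
      (p : ℚ) * B n p - ((p + 1 : ℚ) ^ 2 / (p + 2)) * B n (p + 1)) (p : ℕ) :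
    mk (fun n => B n p / n.factorial) * (exp ℚ - 1) ^ (p + 1) =
      C ((p : ℚ) + 1) * pBernoulliNumerator p := by
  induction p with
  | zero =>
    have h0 : mk (fun n => B n 0 / n.factorial) = bernoulliPowerSeries ℚ := by
      ext n
      simp [bernoulliPowerSeries, hinit]
    simp [h0, bernoulliPowerSeries_mul_exp_sub_one, pBernoulliNumerator]
  | succ p ih =>
    have hFrec := C_mul_mk_succ_eq_sub_derivative hrec p
    have hdG := congrArg (d⁄dX ℚ) ih
    rw [Derivation.leibniz, derivative_exp_sub_one_pow, Derivation.leibniz,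
      derivative_pBernoulliNumerator, derivative_C] at hdG
    have hc : C (((p : ℚ) + 1) ^ 2 / (p + 2)) * C ((p : ℚ) + 2) = C ((p : ℚ) + 1) ^ 2 := by
      rw [← map_mul, ← map_pow, div_mul_cancel₀ _ (by positivity)]
    refine mul_left_cancel₀ ((map_ne_zero_iff C C_injective).mpr (by positivity) :
      C (((p : ℚ) + 1) ^ 2 / (p + 2)) ≠ 0) ?_
    rw [pBernoulliNumerator]
    simp only [smul_eq_mul, Nat.cast_succ, map_add C, map_one, map_ofNat, mul_zero, add_zero]
      at ih hdG hc ⊢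
    -- `(p+1)²/(p+2) F (p+1) u^(p+2) = (p u + (p+1) exp X) F p u^(p+1) - u (F p u^(p+1))'`
    linear_combination (exp ℚ - 1) ^ (p + 2) * hFrec
      + (C (p : ℚ) * (exp ℚ - 1) + (C (p : ℚ) + 1) * exp ℚ) * ih - (exp ℚ - 1) * hdG
      - (exp ℚ * pBernoulliNumerator p - C ((p : ℚ) + 1)⁻¹ * (exp ℚ - 1) ^ (p + 1)) * hc
      + (C (p : ℚ) + 1) * (exp ℚ - 1) ^ (p + 1) * C_inv_mul_natCast_add_one p

end

/-- Let `B n p` be the family of rational numbers determined by `B n 0 = bernoulli n`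
(the `n`-th Bernoulli number with the convention `B₁ = -1/2`) and the recursion
`B (n+1) p = p·B n p - ((p+1)²/(p+2))·B n (p+1)`.  Let
`F p = Σ_{n≥0} B n p · Xⁿ/n!` be the exponential generating function in `ℚ⟦X⟧`.
Then for every `p`:
`F p · (exp X - 1)^(p+1)
  = (p+1)·(X - H_p)·exp(pX) + (p+1)·Σ_{k=1}^{p} C(p,k)·H_k·(exp X - 1)^(p-k)`,
where `H_n` is the `n`-th harmonic number. -/
theorem p_bernoulli_egf_closed_form (B : ℕ → ℕ → ℚ)
    (hinit : ∀ n : ℕ, B n 0 = bernoulli n)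
    (hrec : ∀ n p : ℕ, B (n + 1) p =
      (p : ℚ) * B n p - ((p + 1 : ℚ) ^ 2 / (p + 2)) * B n (p + 1))
    (F : ℕ → PowerSeries ℚ)
    (hF : ∀ p : ℕ, F p = PowerSeries.mk fun n => B n p / n.factorial) :
    ∀ p : ℕ,
      F p * (PowerSeries.exp ℚ - 1) ^ (p + 1) =
        C ((p : ℚ) + 1) * (X - C (harmonic p)) *
            PowerSeries.rescale (p : ℚ) (PowerSeries.exp ℚ) +
          C ((p : ℚ) + 1) *
            ∑ k ∈ Finset.Icc 1 p,
              C ((p.choose k : ℚ) * harmonic k) * (PowerSeries.exp ℚ - 1) ^ (p - k) := by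
  intro p
  rw [hF, mk_mul_exp_sub_one_pow hinit hrec, pBernoulliNumerator_eq, ← exp_pow_eq_rescale_exp]
  ring
end

section
/- For each natural number p, define g_p : ℝ \ {0} → ℝ by g_p(t) = (p+1)·(t - H_p)·e^{pt}/(e^t - 1)^{p+1} + (p+1)·Σ_{k=1}^{p} C(p,k)·H_k/(e^t - 1)^{k+1}, where H_n = Σ_{j=1}^{n} 1/j is the n-th harmonic number (H_0 = 0) and C(p,k) is the binomial coefficient. Then for every p ≥ 0 and every real t ≠ 0, the function g_p is differentiable at t and p·g_p(t) - g_p'(t) = ((p+1)^2/(p+2))·g_{p+1}(t). -/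
open Real Finset

/-- For each natural number `p`, the function
`g p t = (p+1)·(t - H_p)·e^{pt}/(e^t - 1)^{p+1}
        + (p+1)·Σ_{k=1}^{p} C(p,k)·H_k/(e^t - 1)^{k+1}`
(defined for `t ≠ 0`, where `H_n` is the `n`-th harmonic number). -/
noncomputable def gBern (p : ℕ) (t : ℝ) : ℝ :=
  ((p : ℝ) + 1) * (t - (harmonic p : ℝ)) * Real.exp ((p : ℝ) * t) /
      (Real.exp t - 1) ^ (p + 1) +
    ((p : ℝ) + 1) *
      ∑ k ∈ Finset.Icc 1 p,
        (p.choose k : ℝ) * (harmonic k : ℝ) / (Real.exp t - 1) ^ (k + 1)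

/-!
In the variable `y = 1/(e^t - 1)` one has `dy/dt = -y(1+y)` and `e^{pt} y^p = (1+y)^p`, and
`g_p(t) = (p+1)·((t - H_p) e^{pt} y^{p+1} + B_p(y))` with `B_p(y) = Σ_k C(p,k) H_k y^{k+1}`.
The part of the recursion involving `t - H_p` follows from `H_{p+1} = H_p + 1/(p+1)`; the rest
is the polynomial identity `p B_p + y(1+y) B_p' + y²(1+y)^p = (p+1) B_{p+1}`, which holds
coefficientwise by Pascal's rule and `k H_{k-1} + 1 = k H_k`.
-/

theorem Nat.add_one_mul_choose_succ_succ (p j : ℕ) :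
    (p + 1) * (p + 1).choose (j + 1) = (j + 1) * p.choose j + (p + j + 2) * p.choose (j + 1) := by
  have h := Nat.add_one_mul_choose_eq p j
  rw [Nat.choose_succ_succ'] at h ⊢
  linarith

theorem Finset.sum_range_succ_of_apply_zero {M : Type*} [AddCommMonoid M] {f : ℕ → M}
    (hf : f 0 = 0) (n : ℕ) : ∑ k ∈ range (n + 1), f k = ∑ k ∈ range n, f (k + 1) := by
  rw [sum_range_succ', hf, add_zero]

section BinomHarmonicSum

variable {K : Type*} [Field K] [CharZero K]

noncomputable def binomHarmonicSum (p : ℕ) (y : K) : K :=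
  ∑ k ∈ range (p + 1), (p.choose k : K) * (harmonic k : K) * y ^ (k + 1)

theorem binomHarmonicSum_recursion (p : ℕ) (y : K) :
    p * binomHarmonicSum p y
        + (y + y ^ 2) *
            ∑ k ∈ range (p + 1), (p.choose k : K) * (harmonic k : K) * (k + 1) * y ^ k
        + y ^ 2 * (1 + y) ^ p
      = (p + 1) * binomHarmonicSum (p + 1) y := by
  have hbinom : y ^ 2 * (1 + y) ^ p = ∑ k ∈ range (p + 1), (p.choose k : K) * y ^ (k + 2) := by
    rw [add_comm, add_pow, mul_sum]
    exact sum_congr rfl fun k _ => by ring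
  have hshift :
      ∑ k ∈ range (p + 1), (p.choose k : K) * (harmonic k : K) * (p + k + 1) * y ^ (k + 1) =
        ∑ k ∈ range (p + 1),
          (p.choose (k + 1) : K) * (harmonic (k + 1) : K) * (p + k + 2) * y ^ (k + 2) := by
    set f : ℕ → K := fun k => (p.choose k : K) * (harmonic k : K) * (p + k + 1) * y ^ (k + 1)
    calc ∑ k ∈ range (p + 1), f k = ∑ k ∈ range (p + 2), f k := by
          rw [sum_range_succ f (p + 1)]; simp [f]
      _ = ∑ k ∈ range (p + 1), f (k + 1) := sum_range_succ_of_apply_zero (by simp [f]) _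
      _ = _ := sum_congr rfl fun k _ => by simp only [f]; push_cast; ring
  have hlow : p * binomHarmonicSum p y
        + (y + y ^ 2) *
            ∑ k ∈ range (p + 1), (p.choose k : K) * (harmonic k : K) * (k + 1) * y ^ k
      = ∑ k ∈ range (p + 1),
          (p.choose (k + 1) : K) * (harmonic (k + 1) : K) * (p + k + 2) * y ^ (k + 2)
        + ∑ k ∈ range (p + 1), (p.choose k : K) * (harmonic k : K) * (k + 1) * y ^ (k + 2) := by
    rw [← hshift, binomHarmonicSum, mul_sum, mul_sum, ← sum_add_distrib, ← sum_add_distrib]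
    exact sum_congr rfl fun k _ => by ring
  rw [hbinom, hlow, binomHarmonicSum, mul_sum,
    sum_range_succ_of_apply_zero (f := fun k => ((p : K) + 1) *
      (((p + 1).choose k : K) * (harmonic k : K) * y ^ (k + 1))) (by simp),
    ← sum_add_distrib, ← sum_add_distrib]
  refine sum_congr rfl fun k _ => ?_
  have hchoose : ((p : K) + 1) * ((p + 1).choose (k + 1) : K)
      = (k + 1) * (p.choose k : K) + (p + k + 2) * (p.choose (k + 1) : K) := by
    exact_mod_cast Nat.add_one_mul_choose_succ_succ p k
  have hH : ((k : K) + 1) * (harmonic (k + 1) : K) = (k + 1) * (harmonic k : K) + 1 := by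
    rw [harmonic_succ]; push_cast; field_simp
  linear_combination -(harmonic (k + 1) : K) * y ^ (k + 2) * hchoose
    - (p.choose k : K) * y ^ (k + 2) * hH

theorem hasDerivAt_binomHarmonicSum {𝕜 : Type*} [NontriviallyNormedField 𝕜] [CharZero 𝕜]
    (p : ℕ) (y : 𝕜) :
    HasDerivAt (binomHarmonicSum p)
      (∑ k ∈ range (p + 1), (p.choose k : 𝕜) * (harmonic k : 𝕜) * (k + 1) * y ^ k) y := by
  refine (HasDerivAt.fun_sum fun k _ => (hasDerivAt_pow (k + 1) y).const_mul _).congr_deriv ?_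
  refine sum_congr rfl fun k _ => ?_
  push_cast
  ring

end BinomHarmonicSum

theorem exp_mul_inv_exp_sub_one {t : ℝ} (ht : t ≠ 0) :
    exp t * (exp t - 1)⁻¹ = 1 + (exp t - 1)⁻¹ := by
  have hne : exp t - 1 ≠ 0 := sub_ne_zero.mpr ((exp_eq_one_iff t).not.mpr ht)
  field_simp
  ring

theorem hasDerivAt_inv_exp_sub_one {t : ℝ} (ht : t ≠ 0) :
    HasDerivAt (fun s => (exp s - 1)⁻¹) (-((exp t - 1)⁻¹ + (exp t - 1)⁻¹ ^ 2)) t := by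
  have hne : exp t - 1 ≠ 0 := sub_ne_zero.mpr ((exp_eq_one_iff t).not.mpr ht)
  refine (((hasDerivAt_exp t).sub_const 1).inv hne).congr_deriv ?_
  field_simp
  ring

theorem gBern_eq (p : ℕ) (t : ℝ) :
    gBern p t = (p + 1) * ((t - harmonic p) * exp (p * t) * (exp t - 1)⁻¹ ^ (p + 1)
      + binomHarmonicSum p (exp t - 1)⁻¹) := by
  have hsum : ∑ k ∈ Icc 1 p, (p.choose k : ℝ) * (harmonic k : ℝ) / (exp t - 1) ^ (k + 1)
      = binomHarmonicSum p (exp t - 1)⁻¹ := by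
    rw [binomHarmonicSum]
    refine (sum_subset (s₂ := range (p + 1)) (fun k hk => ?_) (fun k hk hk' => ?_)).trans ?_
    · simp only [mem_Icc, mem_range] at hk ⊢; omega
    · obtain rfl : k = 0 := by simp only [mem_range, mem_Icc, not_and, not_le] at hk hk'; omega
      simp
    · exact sum_congr rfl fun k _ => by rw [inv_pow, div_eq_mul_inv]
  rw [gBern, hsum, inv_pow]
  ring

theorem hasDerivAt_gBern (p : ℕ) {t : ℝ} (ht : t ≠ 0) :
    HasDerivAt (gBern p) (p * gBern p t - (p + 1) ^ 2 / (p + 2) * gBern (p + 1) t) t := by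
  have hy := hasDerivAt_inv_exp_sub_one ht
  have hF := (((((hasDerivAt_id t).sub_const (harmonic p : ℝ)).mul
    ((hasDerivAt_exp _).comp t ((hasDerivAt_id t).const_mul (p : ℝ)))).mul (hy.pow (p + 1))).add
    ((hasDerivAt_binomHarmonicSum p _).comp t hy)).const_mul ((p : ℝ) + 1)
  refine (hF.congr_deriv ?_).congr_of_eventuallyEq (.of_forall (gBern_eq p))
  have hcancel : ((p : ℝ) + 1) ^ 2 / (p + 2) * (((p + 1 : ℕ) : ℝ) + 1) = (p + 1) ^ 2 := by
    push_cast; field_simp; ring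
  have hexp_succ : exp (((p + 1 : ℕ) : ℝ) * t) = exp (p * t) * exp t := by
    rw [← exp_add]; push_cast; ring_nf
  have hH : ((p : ℝ) + 1) * harmonic (p + 1) = (p + 1) * harmonic p + 1 := by
    rw [harmonic_succ]; push_cast; field_simp
  rw [gBern_eq, gBern_eq, ← mul_assoc (((p : ℝ) + 1) ^ 2 / (p + 2)), hcancel, hexp_succ]
  set y := (exp t - 1)⁻¹
  have hexp : exp t * y = 1 + y := exp_mul_inv_exp_sub_one ht
  have hexp_pow : exp (p * t) * y ^ p = (1 + y) ^ p := by rw [exp_nat_mul, ← mul_pow, hexp]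
  simp only [Function.comp_apply, id, Pi.mul_apply, Pi.pow_apply, Nat.add_sub_cancel]
  push_cast
  linear_combination -((p : ℝ) + 1) * binomHarmonicSum_recursion p y
    + ((p : ℝ) + 1) ^ 2 * (t - harmonic (p + 1)) * exp (p * t) * y ^ (p + 1) * hexp
    - ((p : ℝ) + 1) * exp (p * t) * y ^ (p + 1) * (1 + y) * hH
    - ((p : ℝ) + 1) * y ^ 2 * hexp_pow

/-- For every `p ≥ 0` and every real `t ≠ 0`, `g p` is differentiable at `t` and
`p·g_p(t) - g_p'(t) = ((p+1)²/(p+2))·g_{p+1}(t)`. -/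
theorem gBern_deriv_recursion (p : ℕ) (t : ℝ) (ht : t ≠ 0) :
    DifferentiableAt ℝ (gBern p) t ∧
      (p : ℝ) * gBern p t - deriv (gBern p) t =
        (((p : ℝ) + 1) ^ 2 / ((p : ℝ) + 2)) * gBern (p + 1) t := by
  have h := hasDerivAt_gBern p ht
  exact ⟨h.differentiableAt, by rw [h.deriv]; ring⟩
end
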